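/- arXiv:1911.09390 — 2 statements merged into one kernel-verified Lean document; each statement's English description precedes it below -/
import Mathlib

section
/- Let A be a selfadjoint operator with 0 ≤ A < 1 and Tr(A) < ∞. Then the von Neumann entropy of the Bose second quantisation satisfies S(Γ(A)) = -Tr( A(1-A)^{-1} log A ) · det(1-A)^{-1}, and the von Neumann entropy of the Fermi second quantisation satisfies S(Λ(A)) = -Tr( A(1+A)^{-1} log A ) · det(1+A). -/
/-!
The eigenvalues of a second quantisation are indexed by occupation-number configurations
`k : ι →₀ ℕ` (with occupations restricted to `{0, 1}` for fermions) and are the products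
`μ_k = ∏ i, λ_i ^ k_i`, so that `-μ_k log μ_k = ∑_i μ_k k_i (-log λ_i)`. For a fixed mode `i` the
configuration sum factors into the single-mode sum over `k_i` times the sum over the other modes;
hence `∑_k μ_k k_i = n̄_i Z`, where `n̄_i` is the mean occupation number (`λ/(1-λ)` resp. `λ/(1+λ)`)
and `Z = ∑_k μ_k` is the partition function. Finally `Z` is the supremum of the finite products of
the single-mode partition functions `(1-λ)⁻¹` resp. `1+λ`. In `ℝ≥0∞` all rearrangements are free.
-/

open scoped ENNReal

namespace Finsupp

variable {ι : Type*}

noncomputable def supportedInsertEquiv {S : Set ι} {m : ι} (hm : m ∉ S) :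
    {k : ι →₀ ℕ // ↑k.support ⊆ insert m S} ≃ ℕ × {k : ι →₀ ℕ // ↑k.support ⊆ S} where
  toFun k := (k.1 m, ⟨k.1.erase m, fun i hi => by
    classical
    rw [Finset.mem_coe, support_erase, Finset.mem_erase] at hi
    exact (k.2 hi.2).resolve_left hi.1⟩)
  invFun p := ⟨single m p.1 + p.2.1, by
    classical
    refine (Finset.coe_subset.2 support_add).trans ?_
    rw [Finset.coe_union]
    exact Set.union_subset ((Finset.coe_subset.2 support_single_subset).trans (by simp))
      (p.2.2.trans (Set.subset_insert m S))⟩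
  left_inv k := Subtype.ext (single_add_erase m k.1)
  right_inv := by
    rintro ⟨j, k, hk⟩
    have hkm : m ∉ k.support := fun h => hm (hk h)
    ext
    · simp [notMem_support_iff.1 hkm]
    · simp [erase_add, erase_of_notMem_support hkm]

theorem prod_single_add_of_notMem {N : Type*} [CommMonoid N] (a : ι → ℕ → N) {m : ι}
    {k : ι →₀ ℕ} (hm : m ∉ k.support) (ha : a m 0 = 1) (j : ℕ) :
    (single m j + k).prod a = a m j * k.prod a := by
  classical
  rw [prod_add_index_of_disjoint, prod_single_index ha]
  exact Finset.disjoint_of_subset_left support_single_subset (Finset.disjoint_singleton_left.2 hm)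

end Finsupp

theorem ENNReal.tsum_eq_iSup_tsum_subtype {α β : Type*} (f : α → ℝ≥0∞) (S : β → Set α)
    (hS : ∀ t : Finset α, ∃ b, ↑t ⊆ S b) : ∑' x, f x = ⨆ b, ∑' x : S b, f x := by
  classical
  refine le_antisymm ?_
    (iSup_le fun b => ENNReal.tsum_comp_le_tsum_of_injective Subtype.val_injective f)
  rw [ENNReal.tsum_eq_iSup_sum]
  refine iSup_le fun t => ?_
  obtain ⟨b, hb⟩ := hS t
  calc ∑ x ∈ t, f x = ∑ x ∈ t.subtype (· ∈ S b), f x := (Finset.sum_subtype_of_mem f hb).symm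
    _ ≤ ∑' x : S b, f x := ENNReal.sum_le_tsum _
    _ ≤ ⨆ b, ∑' x : S b, f x := le_iSup (fun b => ∑' x : S b, f x) b

section ProductWeight

variable {ι : Type*} (a : ι → ℕ → ℝ≥0∞)

theorem tsum_supported_insert_prod_mul (ha : ∀ i, a i 0 = 1) {S : Set ι} {m : ι} (hm : m ∉ S)
    (g : ℕ → ℝ≥0∞) :
    ∑' k : {k : ι →₀ ℕ // ↑k.support ⊆ insert m S}, k.1.prod a * g (k.1 m)
      = (∑' j, a m j * g j) * ∑' k : {k : ι →₀ ℕ // ↑k.support ⊆ S}, k.1.prod a := by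
  rw [← (Finsupp.supportedInsertEquiv hm).symm.tsum_eq, ENNReal.tsum_prod',
    ← ENNReal.tsum_mul_right]
  refine tsum_congr fun j => ?_
  rw [← ENNReal.tsum_mul_left]
  refine tsum_congr fun k => ?_
  have hkm : m ∉ k.1.support := fun h => hm (k.2 h)
  change (Finsupp.single m j + k.1).prod a * g ((Finsupp.single m j + k.1) m) = _
  rw [Finsupp.prod_single_add_of_notMem a hkm (ha m), Finsupp.add_apply,
    Finsupp.single_eq_same, Finsupp.notMem_support_iff.1 hkm, add_zero]
  ring

theorem tsum_supported_prod (ha : ∀ i, a i 0 = 1) (s : Finset ι) :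
    ∑' k : {k : ι →₀ ℕ // ↑k.support ⊆ (s : Set ι)}, k.1.prod a = ∏ i ∈ s, ∑' j, a i j := by
  classical
  induction s using Finset.induction_on with
  | empty =>
    have hk (k : {k : ι →₀ ℕ // ↑k.support ⊆ ((∅ : Finset ι) : Set ι)}) : k.1 = 0 := by
      simpa using k.2
    rw [Finset.prod_empty, tsum_eq_single ⟨0, by simp⟩ fun k hk' => (hk' (Subtype.ext (hk k))).elim]
    simp
  | insert m s hm ih =>
    have split := tsum_supported_insert_prod_mul a ha (S := ↑s) (Finset.mem_coe.not.2 hm) 1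
    simp only [Pi.one_apply, mul_one] at split
    rw [Finset.coe_insert, split, ih, Finset.prod_insert hm]

theorem tsum_finsupp_prod_eq_iSup (ha : ∀ i, a i 0 = 1) :
    ∑' k : ι →₀ ℕ, k.prod a = ⨆ s : Finset ι, ∏ i ∈ s, ∑' j, a i j := by
  classical
  rw [ENNReal.tsum_eq_iSup_tsum_subtype _
    (fun s : Finset ι => {k : ι →₀ ℕ | ↑k.support ⊆ (s : Set ι)})
    fun t => ⟨t.sup Finsupp.support, fun k hk => Finset.coe_subset.2 (Finset.le_sup hk)⟩]
  exact iSup_congr (tsum_supported_prod a ha)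

theorem tsum_finsupp_prod_mul_apply (ha : ∀ i, a i 0 = 1) (m : ι) {x : ℝ≥0∞}
    (hx : x * ∑' j, a m j = ∑' j, a m j * j) :
    ∑' k : ι →₀ ℕ, k.prod a * k m = x * ∑' k : ι →₀ ℕ, k.prod a := by
  have split (g : ℕ → ℝ≥0∞) : ∑' k : ι →₀ ℕ, k.prod a * g (k m)
      = (∑' j, a m j * g j) * ∑' k : {k : ι →₀ ℕ // ↑k.support ⊆ ({m}ᶜ : Set ι)}, k.1.prod a := by
    rw [← tsum_supported_insert_prod_mul a ha (Set.notMem_compl_iff.2 (Set.mem_singleton m)) g]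
    exact ((Equiv.subtypeUnivEquiv fun _ i _ => em (i = m)).tsum_eq
      (fun k : ι →₀ ℕ => k.prod a * g (k m))).symm
  have total := split 1
  simp only [Pi.one_apply, mul_one] at total
  rw [split (↑), total, ← hx, mul_assoc]

end ProductWeight

section Entropy

variable {ι : Type*} (lam : ι → ℝ)

-- `A` is the set of allowed occupation numbers: `univ` for bosons, `Iic 1` for fermions.
noncomputable def modeWeight (A : Set ℕ) (i : ι) (j : ℕ) : ℝ≥0∞ :=
  A.indicator (fun j => ENNReal.ofReal (lam i) ^ j) j

theorem modeWeight_zero {A : Set ℕ} (hA : 0 ∈ A) (i : ι) : modeWeight lam A i 0 = 1 := by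
  simp [modeWeight, hA]

theorem Finsupp.prod_modeWeight (hlam : ∀ i, 0 ≤ lam i) {A : Set ℕ} (hA : 0 ∈ A)
    (k : ι →₀ ℕ) :
    k.prod (modeWeight lam A) =
      {k : ι →₀ ℕ | ∀ i, k i ∈ A}.indicator (fun k => ENNReal.ofReal (k.prod (lam · ^ ·))) k := by
  by_cases hk : k ∈ {k : ι →₀ ℕ | ∀ i, k i ∈ A}
  · rw [Set.indicator_of_mem hk, Finsupp.prod, Finsupp.prod,
      ENNReal.ofReal_prod_of_nonneg fun i _ => pow_nonneg (hlam i) _]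
    exact Finset.prod_congr rfl fun i _ => by
      rw [modeWeight, Set.indicator_of_mem (hk i), ENNReal.ofReal_pow (hlam i)]
  · obtain ⟨i, hi⟩ := not_forall.1 hk
    have hi_supp : i ∈ k.support := Finsupp.mem_support_iff.2 fun h => hi (h ▸ hA)
    rw [Set.indicator_of_notMem hk]
    exact Finset.prod_eq_zero hi_supp (Set.indicator_of_notMem hi _)

theorem ENNReal.ofReal_negMulLog_finsupp_prod (h0 : ∀ i, 0 ≤ lam i) (h1 : ∀ i, lam i ≤ 1)
    (k : ι →₀ ℕ) :
    ENNReal.ofReal (Real.negMulLog (k.prod (lam · ^ ·)))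
      = ∑' i, ENNReal.ofReal (k.prod (lam · ^ ·)) * k i * ENNReal.ofReal (-Real.log (lam i)) := by
  set μ := k.prod (lam · ^ ·) with hμ_def
  have hμ : 0 ≤ μ := Finset.prod_nonneg fun i _ => pow_nonneg (h0 i) _
  simp_rw [mul_assoc, ENNReal.tsum_mul_left]
  rw [Real.negMulLog, neg_mul_comm, ENNReal.ofReal_mul hμ]
  rcases eq_or_ne μ 0 with hμ0 | hμ0
  · simp [hμ0]
  congr 1
  have hlam : ∀ i ∈ k.support, lam i ^ k i ≠ 0 := Finset.prod_ne_zero_iff.1 hμ0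
  rw [hμ_def, Finsupp.prod, Real.log_prod hlam, ← Finset.sum_neg_distrib,
    ENNReal.ofReal_sum_of_nonneg fun i _ => by
      rw [Real.log_pow, ← mul_neg]
      exact mul_nonneg (Nat.cast_nonneg _) (neg_nonneg.2 (Real.log_nonpos (h0 i) (h1 i))),
    tsum_eq_sum fun i hi => by rw [Finsupp.notMem_support_iff.1 hi]; simp]
  refine Finset.sum_congr rfl fun i _ => ?_
  rw [Real.log_pow, ← mul_neg, ENNReal.ofReal_mul (Nat.cast_nonneg _), ENNReal.ofReal_natCast]

theorem tsum_indicator_ofReal_negMulLog (h0 : ∀ i, 0 ≤ lam i) (h1 : ∀ i, lam i ≤ 1)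
    {A : Set ℕ} (hA : 0 ∈ A) (meanOcc : ι → ℝ) (hmeanOcc : ∀ i, 0 ≤ meanOcc i)
    (hmeanOcc_mul : ∀ i, ENNReal.ofReal (meanOcc i) * ∑' j, modeWeight lam A i j
      = ∑' j, modeWeight lam A i j * j) :
    ∑' k : ι →₀ ℕ, {k : ι →₀ ℕ | ∀ i, k i ∈ A}.indicator
        (fun k => ENNReal.ofReal (Real.negMulLog (k.prod (lam · ^ ·)))) k
      = (∑' i, ENNReal.ofReal (-(meanOcc i * Real.log (lam i))))
          * ⨆ s : Finset ι, ∏ i ∈ s, ∑' j, modeWeight lam A i j := by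
  have expand (k : ι →₀ ℕ) : {k : ι →₀ ℕ | ∀ i, k i ∈ A}.indicator
      (fun k => ENNReal.ofReal (Real.negMulLog (k.prod (lam · ^ ·)))) k
      = ∑' i, k.prod (modeWeight lam A) * k i * ENNReal.ofReal (-Real.log (lam i)) := by
    rw [Finsupp.prod_modeWeight lam h0 hA]
    by_cases hk : k ∈ {k : ι →₀ ℕ | ∀ i, k i ∈ A}
    · simp only [Set.indicator_of_mem hk, ENNReal.ofReal_negMulLog_finsupp_prod lam h0 h1]
    · simp [Set.indicator_of_notMem hk]
  have hw := modeWeight_zero lam hA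
  calc _ = ∑' (i) (k : ι →₀ ℕ), k.prod (modeWeight lam A) * k i
        * ENNReal.ofReal (-Real.log (lam i)) := by rw [tsum_congr expand, ENNReal.tsum_comm]
    _ = ∑' i, ENNReal.ofReal (-(meanOcc i * Real.log (lam i)))
        * ∑' k : ι →₀ ℕ, k.prod (modeWeight lam A) := by
      refine tsum_congr fun i => ?_
      rw [ENNReal.tsum_mul_right, tsum_finsupp_prod_mul_apply _ hw i (hmeanOcc_mul i),
        mul_right_comm, ← ENNReal.ofReal_mul (hmeanOcc i), mul_neg]
    _ = _ := by rw [ENNReal.tsum_mul_right, tsum_finsupp_prod_eq_iSup _ hw]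

end Entropy

theorem ENNReal.tsum_ofReal_pow {r : ℝ} (h0 : 0 ≤ r) (h1 : r < 1) :
    ∑' j : ℕ, ENNReal.ofReal r ^ j = ENNReal.ofReal (1 - r)⁻¹ := by
  rw [ENNReal.tsum_geometric, ← ENNReal.ofReal_one, ← ENNReal.ofReal_sub _ h0,
    ENNReal.ofReal_inv_of_pos (sub_pos.2 h1)]

theorem ENNReal.tsum_ofReal_pow_mul_natCast {r : ℝ} (h0 : 0 ≤ r) (h1 : r < 1) :
    ∑' j : ℕ, ENNReal.ofReal r ^ j * j = ENNReal.ofReal (r / (1 - r) ^ 2) := by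
  have hr : ‖r‖ < 1 := by rwa [Real.norm_eq_abs, abs_of_nonneg h0]
  rw [← tsum_coe_mul_geometric_of_norm_lt_one hr, ENNReal.ofReal_tsum_of_nonneg
    (fun j => by positivity) (summable_pow_mul_geometric_of_norm_lt_one 1 hr |>.congr
      fun j => by simp [mul_comm])]
  exact tsum_congr fun j => by
    rw [ENNReal.ofReal_mul (Nat.cast_nonneg j), ENNReal.ofReal_pow h0, ENNReal.ofReal_natCast,
      mul_comm]

section SingleMode

variable {ι : Type*} (lam : ι → ℝ) {i : ι}

@[simp]
theorem modeWeight_univ (j : ℕ) : modeWeight lam Set.univ i j = ENNReal.ofReal (lam i) ^ j :=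
  congrFun (Set.indicator_univ _) j

theorem ofReal_mul_tsum_modeWeight_univ (h0 : 0 ≤ lam i) (h1 : lam i < 1) :
    ENNReal.ofReal (lam i / (1 - lam i)) * ∑' j, modeWeight lam Set.univ i j
      = ∑' j, modeWeight lam Set.univ i j * j := by
  simp only [modeWeight_univ]
  rw [ENNReal.tsum_ofReal_pow h0 h1, ENNReal.tsum_ofReal_pow_mul_natCast h0 h1,
    ← ENNReal.ofReal_mul (div_nonneg h0 (sub_nonneg.2 h1.le)), sq, ← div_div, ← div_eq_mul_inv]

theorem tsum_modeWeight_Iic_one (h0 : 0 ≤ lam i) :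
    ∑' j, modeWeight lam (Set.Iic 1) i j = ENNReal.ofReal (1 + lam i) := by
  rw [tsum_eq_sum (s := Finset.range 2) fun j hj => by
    simp only [modeWeight, Finset.mem_range] at hj ⊢
    exact Set.indicator_of_notMem (by simpa using hj) _]
  simp [modeWeight, Finset.sum_range_succ, ENNReal.ofReal_add zero_le_one h0]

theorem ofReal_mul_tsum_modeWeight_Iic_one (h0 : 0 ≤ lam i) :
    ENNReal.ofReal (lam i / (1 + lam i)) * ∑' j, modeWeight lam (Set.Iic 1) i j
      = ∑' j, modeWeight lam (Set.Iic 1) i j * j := by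
  have hpos : 0 < 1 + lam i := by linarith
  rw [tsum_modeWeight_Iic_one lam h0, ← ENNReal.ofReal_mul (div_nonneg h0 hpos.le),
    div_mul_cancel₀ _ hpos.ne', tsum_eq_sum (s := Finset.range 2) fun j hj => by
      simp only [modeWeight, Finset.mem_range] at hj ⊢
      rw [Set.indicator_of_notMem (by simpa using hj), zero_mul]]
  simp [modeWeight, Finset.sum_range_succ]

end SingleMode

theorem tsum_finset_eq_tsum_indicator_finsupp {ι : Type*} [DecidableEq ι] (F : (ι →₀ ℕ) → ℝ≥0∞) :
    ∑' s : Finset ι, F (Multiset.toFinsupp s.val)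
      = ∑' k : ι →₀ ℕ, {k : ι →₀ ℕ | ∀ i, k i ∈ Set.Iic 1}.indicator F k := by
  rw [← (Multiset.toFinsupp.injective.comp Finset.val_injective).tsum_eq fun k hk => ?_]
  · refine tsum_congr fun s => (Set.indicator_of_mem (fun i => ?_) F).symm
    simpa using Multiset.nodup_iff_count_le_one.1 s.nodup i
  · have hk' : ∀ i, k i ≤ 1 := Set.mem_of_indicator_ne_zero hk
    exact ⟨⟨k.toMultiset, Multiset.nodup_iff_count_le_one.2 fun i => by
      simpa using hk' i⟩, Finsupp.toMultiset_toFinsupp k⟩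

theorem Finsupp.prod_pow_toFinsupp_val {ι M : Type*} [DecidableEq ι] [CommMonoid M] (f : ι → M)
    (s : Finset ι) : (Multiset.toFinsupp s.val).prod (f · ^ ·) = ∏ i ∈ s, f i := by
  rw [Finsupp.prod, Multiset.toFinsupp_support, Finset.val_toFinset]
  exact Finset.prod_congr rfl fun i hi => by
    rw [Multiset.toFinsupp_apply, Multiset.count_eq_one_of_mem s.nodup hi, pow_one]

theorem entropy_second_quantisation_general (lam : ℕ → ℝ)
    (h0 : ∀ n, 0 ≤ lam n) (h1 : ∀ n, lam n < 1) :
    (∑' k : ℕ →₀ ℕ, ENNReal.ofReal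
        (-((∏ n ∈ k.support, lam n ^ k n) * Real.log (∏ n ∈ k.support, lam n ^ k n)))
      = (∑' n, ENNReal.ofReal (-(lam n / (1 - lam n) * Real.log (lam n)))) *
          (⨆ s : Finset ℕ, ∏ n ∈ s, ENNReal.ofReal ((1 - lam n)⁻¹))) ∧
    (∑' s : Finset ℕ, ENNReal.ofReal
        (-((∏ n ∈ s, lam n) * Real.log (∏ n ∈ s, lam n)))
      = (∑' n, ENNReal.ofReal (-(lam n / (1 + lam n) * Real.log (lam n)))) *
          (⨆ s : Finset ℕ, ∏ n ∈ s, ENNReal.ofReal (1 + lam n))) := by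
  have hle n := (h1 n).le
  constructor
  · have bose := tsum_indicator_ofReal_negMulLog lam h0 hle (Set.mem_univ 0) _
      (fun n => div_nonneg (h0 n) (sub_nonneg.2 (hle n)))
      fun n => ofReal_mul_tsum_modeWeight_univ lam (h0 n) (h1 n)
    simpa [ENNReal.tsum_ofReal_pow (h0 _) (h1 _), Real.negMulLog, Finsupp.prod] using bose
  · have fermi := tsum_indicator_ofReal_negMulLog lam h0 hle (Set.mem_Iic.2 zero_le_one) _
      (fun n => div_nonneg (h0 n) (by linarith [h0 n]))
      fun n => ofReal_mul_tsum_modeWeight_Iic_one lam (h0 n)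
    rw [← tsum_finset_eq_tsum_indicator_finsupp] at fermi
    simpa [Finsupp.prod_pow_toFinsupp_val, tsum_modeWeight_Iic_one lam (h0 _), Real.negMulLog]
      using fermi

theorem entropy_second_quantisation (lam : ℕ → ℝ)
    (h0 : ∀ n, 0 ≤ lam n) (h1 : ∀ n, lam n < 1) (htr : Summable lam) :
    (∑' k : ℕ →₀ ℕ, ENNReal.ofReal
        (-((∏ n ∈ k.support, lam n ^ k n) * Real.log (∏ n ∈ k.support, lam n ^ k n)))
      = (∑' n, ENNReal.ofReal (-(lam n / (1 - lam n) * Real.log (lam n)))) *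
          (⨆ s : Finset ℕ, ∏ n ∈ s, ENNReal.ofReal ((1 - lam n)⁻¹))) ∧
    (∑' s : Finset ℕ, ENNReal.ofReal
        (-((∏ n ∈ s, lam n) * Real.log (∏ n ∈ s, lam n)))
      = (∑' n, ENNReal.ofReal (-(lam n / (1 + lam n) * Real.log (lam n)))) *
          (⨆ s : Finset ℕ, ∏ n ∈ s, ENNReal.ofReal (1 + lam n))) :=
  entropy_second_quantisation_general lam h0 h1
end

section
/- Let γ_n be the Fourier coefficients of the characteristic function of the arc I₁ = {e^{iθ} : 0 < θ < π/2}, i.e. γ_n = (1/2π)(i/n)(e^{-inπ/2} - 1) for n ≠ 0. Define g_n = (1/2)(γ_{2-n} + γ_{-2-n}) + γ_n for odd n. Then g_n = (i/2π)(e^{-iπn/2} - 1) · (-4)/(n(n² - 4)) = O(n^{-3}). -/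
/-!
For odd `n` the indices `2 - n` and `-2 - n` are congruent to `n` modulo `4`, so all three
coefficients share the factor `e^{-inπ/2} - 1`, and `g_n` reduces to the partial-fraction
identity `½(1/(2-n) + 1/(-2-n)) + 1/n = -4/(n(n²-4))`. Since `|n² - 4| ≥ n²/3` for every integer
`n ≠ ±2`, this denominator is of order `|n|³`.
-/

open scoped Real
open Complex

lemma Int.ModEq.exp_neg_I_mul_mul_pi_div_two_eq {a b : ℤ} (h : a ≡ b [ZMOD 4]) :
    exp (-I * a * (π / 2)) = exp (-I * b * (π / 2)) := by
  obtain ⟨k, hk⟩ := Int.modEq_iff_dvd.1 h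
  have hsplit : -I * b * (π / 2) = -I * a * (π / 2) + (-k : ℤ) * (2 * π * I) := by
    rw [show b = a + 4 * k by omega]; push_cast; ring
  rw [hsplit, exp_add, exp_int_mul_two_pi_mul_I, mul_one]

lemma half_mul_inv_add_inv_add_inv {K : Type*} [Field K] [CharZero K] {x : K} (hx : x ≠ 0)
    (h₁ : 2 - x ≠ 0) (h₂ : -2 - x ≠ 0) :
    1 / 2 * (1 / (2 - x) + 1 / (-2 - x)) + 1 / x = -4 / (x * (x ^ 2 - 4)) := by
  have h₃ : x ^ 2 - 4 ≠ 0 := by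
    rw [show x ^ 2 - 4 = (2 - x) * (-2 - x) by ring]
    exact mul_ne_zero h₁ h₂
  field_simp
  ring

lemma sq_le_three_mul_abs_sq_sub_four {n : ℤ} (h₁ : n ≠ 2) (h₂ : n ≠ -2) :
    n ^ 2 ≤ 3 * |n ^ 2 - 4| := by
  rcases le_or_gt n (-3) with h | h
  · rw [abs_of_nonneg (by nlinarith)]; nlinarith
  rcases le_or_gt 3 n with h' | h'
  · rw [abs_of_nonneg (by nlinarith)]; nlinarith
  interval_cases n <;> simp_all

lemma norm_neg_four_div_le {n : ℤ} (hn : n ≠ 0) (h₁ : n ≠ 2) (h₂ : n ≠ -2) :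
    ‖(-4 : ℂ) / (n * (n ^ 2 - 4))‖ ≤ 12 / |(n : ℝ)| ^ 3 := by
  have hsq : (n : ℝ) ^ 2 ≤ 3 * |(n : ℝ) ^ 2 - 4| := by
    exact_mod_cast sq_le_three_mul_abs_sq_sub_four h₁ h₂
  have hn' : 0 < |(n : ℝ)| := by positivity
  have hnorm : ‖(-4 : ℂ) / (n * (n ^ 2 - 4))‖ = 4 / (|(n : ℝ)| * |(n : ℝ) ^ 2 - 4|) := by
    rw [show (n : ℂ) * (n ^ 2 - 4) = ((n * (n ^ 2 - 4) : ℤ) : ℂ) by push_cast; ring]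
    rw [norm_div, norm_neg, norm_intCast]
    push_cast
    rw [abs_mul]; norm_num
  have h4 : 0 < |(n : ℝ) ^ 2 - 4| := by nlinarith [pow_pos hn' 2, sq_abs (n : ℝ)]
  rw [hnorm, div_le_div_iff₀ (by positivity) (by positivity)]
  have hcube : |(n : ℝ)| ^ 3 = |(n : ℝ)| * (n : ℝ) ^ 2 := by rw [← sq_abs]; ring
  rw [hcube]
  nlinarith [mul_le_mul_of_nonneg_left hsq hn'.le]

lemma fourier_g_eq_of_odd (γ : ℤ → ℂ)
    (hγ : ∀ n : ℤ, n ≠ 0 →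
      γ n = (1 / (2 * (π : ℂ))) * (I / (n : ℂ)) * (exp (-I * (n : ℂ) * ((π : ℂ) / 2)) - 1))
    {n : ℤ} (hn : Odd n) :
    (1 / 2 : ℂ) * (γ (2 - n) + γ (-2 - n)) + γ n
      = (I / (2 * (π : ℂ))) * (exp (-I * (π : ℂ) * (n : ℂ) / 2) - 1) *
          (-4 / ((n : ℂ) * ((n : ℂ) ^ 2 - 4))) := by
  obtain ⟨m, hm⟩ := hn
  have h₀ : n ≠ 0 := by omega
  have h₁ : 2 - n ≠ 0 := by omega
  have h₂ : -2 - n ≠ 0 := by omega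
  have hmod₁ : 2 - n ≡ n [ZMOD 4] := Int.modEq_iff_dvd.2 ⟨m, by omega⟩
  have hmod₂ : -2 - n ≡ n [ZMOD 4] := Int.modEq_iff_dvd.2 ⟨m + 1, by omega⟩
  have hx : (n : ℂ) ≠ 0 := by exact_mod_cast h₀
  have hx₁ : 2 - (n : ℂ) ≠ 0 := by exact_mod_cast h₁
  have hx₂ : -2 - (n : ℂ) ≠ 0 := by exact_mod_cast h₂
  rw [hγ _ h₀, hγ _ h₁, hγ _ h₂, hmod₁.exp_neg_I_mul_mul_pi_div_two_eq,
    hmod₂.exp_neg_I_mul_mul_pi_div_two_eq, show -I * π * n / 2 = -I * n * (π / 2) by ring]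
  calc _ = I / (2 * π) * (exp (-I * n * (π / 2)) - 1) *
        (1 / 2 * (1 / (2 - n) + 1 / (-2 - n)) + 1 / n) := by push_cast; ring
    _ = _ := by rw [half_mul_inv_add_inv_add_inv hx hx₁ hx₂]

lemma norm_fourier_g_closed_form_le {n : ℤ} (hn : n ≠ 0) (h₁ : n ≠ 2) (h₂ : n ≠ -2) :
    ‖(I / (2 * (π : ℂ))) * (exp (-I * (π : ℂ) * (n : ℂ) / 2) - 1) *
        (-4 / ((n : ℂ) * ((n : ℂ) ^ 2 - 4)))‖ ≤ 12 / π / |(n : ℝ)| ^ 3 := by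
  have hI : ‖I / (2 * (π : ℂ))‖ = 1 / (2 * π) := by
    rw [norm_div, norm_I, norm_mul, Complex.norm_two, norm_real, Real.norm_of_nonneg Real.pi_pos.le]
  have hexp : ‖exp (-I * (π : ℂ) * (n : ℂ) / 2) - 1‖ ≤ 2 := by
    rw [show -I * (π : ℂ) * n / 2 = I * ((-(π * n / 2) : ℝ) : ℂ) by push_cast; ring]
    calc _ ≤ ‖exp (I * ((-(π * n / 2) : ℝ) : ℂ))‖ + ‖(1 : ℂ)‖ := norm_sub_le _ _
      _ = 2 := by rw [norm_exp_I_mul_ofReal, norm_one]; norm_num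
  rw [norm_mul, norm_mul, hI]
  calc _ ≤ 1 / (2 * π) * 2 * (12 / |(n : ℝ)| ^ 3) := by
        gcongr
        exact norm_neg_four_div_le hn h₁ h₂
    _ = _ := by field_simp

theorem fourier_coefficients_g (γ : ℤ → ℂ)
    (hγ : ∀ n : ℤ, n ≠ 0 →
      γ n = (1 / (2 * (π : ℂ))) * (Complex.I / (n : ℂ)) *
        (Complex.exp (-Complex.I * (n : ℂ) * ((π : ℂ) / 2)) - 1)) :
    (∀ n : ℤ, Odd n →
      (1 / 2 : ℂ) * (γ (2 - n) + γ (-2 - n)) + γ n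
        = (Complex.I / (2 * (π : ℂ))) *
            (Complex.exp (-Complex.I * (π : ℂ) * (n : ℂ) / 2) - 1) *
            (-4 / ((n : ℂ) * ((n : ℂ) ^ 2 - 4)))) ∧
    ∃ C : ℝ, ∀ n : ℤ, Odd n →
      ‖(1 / 2 : ℂ) * (γ (2 - n) + γ (-2 - n)) + γ n‖ ≤ C / |(n : ℝ)| ^ 3 := by
  refine ⟨fun n hn => fourier_g_eq_of_odd γ hγ hn, 12 / π, fun n hn => ?_⟩
  rw [fourier_g_eq_of_odd γ hγ hn]
  obtain ⟨m, rfl⟩ := hn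
  exact norm_fourier_g_closed_form_le (by omega) (by omega) (by omega)
end
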